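/- There is an absolute constant C > 0 with the following property. Let G be an abelian group and A ⊆ G a finite set with dim(A) ≥ 2. Set k = ⌈dim(A)·log dim(A)⌉ and d = dim_k(A), and assume d ≥ 2. Then |nA| ≥ exp(C⁻¹·d·log d), where n = ⌈d²·log d⌉. -/

import Mathlib

open Finset Pointwise

universe u

/-- A finset `Λ` in an abelian group is `k`-dissociated if every integer relation
`∑ ε_λ • λ = 0` with `|ε_λ| ≤ k` forces all `ε_λ = 0`. -/
def IsKDissociated {G : Type*} [AddCommGroup G] (k : ℕ) (Λ : Finset G) : Prop :=
  ∀ ε : G → ℤ, (∀ x ∈ Λ, |ε x| ≤ (k : ℤ)) → (∑ x ∈ Λ, ε x • x) = 0 → ∀ x ∈ Λ, ε x = 0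

/-- `addDim k A` is the maximal size of a `k`-dissociated subset of `A`. -/
noncomputable def addDim {G : Type*} [AddCommGroup G] (k : ℕ) (A : Finset G) : ℕ :=
  sSup {n : ℕ | ∃ Λ : Finset G, Λ ⊆ A ∧ Λ.card = n ∧ IsKDissociated k Λ}

/-- `nFold A n` is the `n`-fold sumset `A + A + ⋯ + A` (`n` summands). -/
def nFold {G : Type*} [AddCommGroup G] [DecidableEq G] (A : Finset G) : ℕ → Finset G
  | 0 => {0}
  | n + 1 => nFold A n + A

/-!
Pick a `k`-dissociated `Λ ⊆ A` with `#Λ = d`. Since `k ≥ dim A ≥ d`, the `(d + 1) ^ d` sums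
`∑ ε_λ • λ` with `0 ≤ ε_λ ≤ d` are pairwise distinct: two of them differ by a relation with
coefficients in `[-d, d]`. Each lies in `s • A` for some `s ≤ d² ≤ n`, and `#(s • A) ≤ #(n • A)`,
so `(d + 1) ^ d ≤ (d² + 1) · #(n • A)`, which forces `#(n • A) ≥ d ^ (d / 4)`.
-/

section Dissociation

variable {G : Type*} [AddCommGroup G] {j k : ℕ} {Λ A : Finset G}

theorem IsKDissociated.mono (hjk : j ≤ k) (hΛ : IsKDissociated k Λ) : IsKDissociated j Λ :=
  fun ε hε hsum => hΛ ε (fun x hx => (hε x hx).trans (by exact_mod_cast hjk)) hsum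

theorem IsKDissociated.eq_zero_of_sum_subtype_eq_zero (hΛ : IsKDissociated k Λ) (ε : Λ → ℤ)
    (hε : ∀ x, |ε x| ≤ k) (hsum : ∑ x : Λ, ε x • (x : G) = 0) : ε = 0 := by
  classical
  set δ : G → ℤ := fun y => if h : y ∈ Λ then ε ⟨y, h⟩ else 0
  have hδ : ∀ x : Λ, δ x = ε x := fun x => dif_pos x.2
  have hδsum : ∑ y ∈ Λ, δ y • y = 0 := by
    rw [← Finset.sum_coe_sort]
    simpa only [hδ] using hsum
  funext x
  simpa only [hδ, Pi.zero_apply] using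
    hΛ δ (fun y hy => by simpa only [hδ ⟨y, hy⟩] using hε ⟨y, hy⟩) hδsum x x.2

theorem IsKDissociated.injOn_sum_nsmul (hΛ : IsKDissociated k Λ) :
    Set.InjOn (fun ε : Λ → ℕ => ∑ x, ε x • (x : G)) {ε | ∀ x, ε x ≤ k} := by
  intro ε hε ε' hε' heq
  have hdiff := hΛ.eq_zero_of_sum_subtype_eq_zero (fun x => (ε x : ℤ) - ε' x)
    (fun x => abs_sub_le_iff.2 ⟨by linarith [hε x], by linarith [hε' x]⟩)
    (by simpa only [sub_smul, natCast_zsmul, Finset.sum_sub_distrib, sub_eq_zero] using heq)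
  funext x
  simpa [sub_eq_zero] using congr_fun hdiff x

theorem addDim_set_bddAbove (k : ℕ) (A : Finset G) :
    BddAbove {n | ∃ Λ : Finset G, Λ ⊆ A ∧ Λ.card = n ∧ IsKDissociated k Λ} :=
  ⟨A.card, by rintro _ ⟨Λ, hΛA, rfl, -⟩; exact Finset.card_le_card hΛA⟩

theorem exists_isKDissociated_card_eq_addDim (k : ℕ) (A : Finset G) :
    ∃ Λ ⊆ A, Λ.card = addDim k A ∧ IsKDissociated k Λ := by
  refine Nat.sSup_mem ?_ (addDim_set_bddAbove k A)
  exact ⟨0, ∅, Finset.empty_subset A, rfl, fun _ _ _ _ hx => absurd hx (Finset.notMem_empty _)⟩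

theorem IsKDissociated.card_le_addDim (hΛA : Λ ⊆ A) (hΛ : IsKDissociated k Λ) :
    Λ.card ≤ addDim k A :=
  le_csSup (addDim_set_bddAbove k A) ⟨Λ, hΛA, rfl, hΛ⟩

theorem addDim_anti (hjk : j ≤ k) (A : Finset G) : addDim k A ≤ addDim j A := by
  obtain ⟨Λ, hΛA, hΛcard, hΛ⟩ := exists_isKDissociated_card_eq_addDim k A
  exact hΛcard ▸ (hΛ.mono hjk).card_le_addDim hΛA

end Dissociation

section Sumsets

variable {G : Type*} [AddCommGroup G] [DecidableEq G]

theorem nFold_eq_nsmul (A : Finset G) (n : ℕ) : nFold A n = n • A := by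
  induction n with
  | zero => rfl
  | succ n ih => rw [nFold, ih, succ_nsmul]

theorem sum_nsmul_mem_nsmul {ι : Type*} {A : Finset G} (s : Finset ι) (c : ι → ℕ) {f : ι → G}
    (hf : ∀ i ∈ s, f i ∈ A) : ∑ i ∈ s, c i • f i ∈ (∑ i ∈ s, c i) • A := by
  induction s using Finset.cons_induction with
  | empty => simp
  | cons a s ha ih =>
    rw [Finset.sum_cons, Finset.sum_cons, add_nsmul]
    exact Finset.add_mem_add (Finset.nsmul_mem_nsmul (hf a (Finset.mem_cons_self a s)))
      (ih fun i hi => hf i (Finset.mem_cons_of_mem hi))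

theorem card_pow_le_mul_card_nsmul {k m n : ℕ} {Λ A : Finset G} (hA : A.Nonempty)
    (hΛA : Λ ⊆ A) (hΛ : IsKDissociated k Λ) (hmk : m ≤ k) (hmn : m * Λ.card ≤ n) :
    (m + 1) ^ Λ.card ≤ (m * Λ.card + 1) * (n • A).card := by
  set g : (Λ → ℕ) → G := fun ε => ∑ x, ε x • (x : G)
  set coeffs := Fintype.piFinset fun _ : Λ => Finset.range (m + 1)
  have hcoeffs : ∀ ε ∈ coeffs, ∀ x, ε x ≤ m := by simp [coeffs]
  have hcard : coeffs.card = (m + 1) ^ Λ.card := by simp [coeffs]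
  have hmaps : coeffs.image g ⊆ (Finset.range (m * Λ.card + 1)).biUnion (· • A) := by
    simp only [Finset.subset_iff, Finset.mem_image, Finset.mem_biUnion, Finset.mem_range,
      Nat.lt_succ_iff]
    rintro _ ⟨ε, hε, rfl⟩
    refine ⟨∑ x, ε x, ?_, sum_nsmul_mem_nsmul _ ε fun x _ => hΛA x.2⟩
    calc ∑ x, ε x ≤ ∑ _x : Λ, m := Finset.sum_le_sum fun x _ => hcoeffs ε hε x
      _ = m * Λ.card := by simp [mul_comm]
  calc (m + 1) ^ Λ.card = (coeffs.image g).card := by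
        rw [Finset.card_image_of_injOn (hΛ.injOn_sum_nsmul.mono fun ε hε x =>
          (hcoeffs ε hε x).trans hmk), hcard]
    _ ≤ ∑ s ∈ Finset.range (m * Λ.card + 1), (s • A).card :=
        (Finset.card_le_card hmaps).trans Finset.card_biUnion_le
    _ ≤ (m * Λ.card + 1) * (n • A).card := by
        simpa using Finset.sum_le_card_nsmul _ _ _ fun s hs =>
          hA.card_nsmul_mono ((Nat.lt_succ_iff.1 (Finset.mem_range.1 hs)).trans hmn)

end Sumsets

section Estimates

theorem pow_sub_two_lt_of_pow_le_mul {d N : ℕ} (hd : 2 ≤ d) (h : (d + 1) ^ d ≤ (d ^ 2 + 1) * N) :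
    (d + 1) ^ (d - 2) < N := by
  by_contra! hN
  have : (d ^ 2 + 1) * N < (d + 1) ^ 2 * (d + 1) ^ (d - 2) :=
    calc (d ^ 2 + 1) * N ≤ (d ^ 2 + 1) * (d + 1) ^ (d - 2) := by gcongr
      _ < (d + 1) ^ 2 * (d + 1) ^ (d - 2) :=
        Nat.mul_lt_mul_of_pos_right (by nlinarith) (by positivity)
  rw [← pow_add, Nat.add_sub_cancel' hd] at this
  omega

theorem pow_self_le_pow_four_of_pow_sub_two_lt {d N : ℕ} (hd : 2 ≤ d)
    (h : (d + 1) ^ (d - 2) < N) : d ^ d ≤ N ^ 4 := by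
  rcases hd.eq_or_lt with rfl | hd
  · calc 2 ^ 2 ≤ 2 ^ 4 := by norm_num
      _ ≤ N ^ 4 := Nat.pow_le_pow_left h 4
  · calc d ^ d ≤ d ^ (4 * (d - 2)) := Nat.pow_le_pow_right (by omega) (by omega)
      _ = (d ^ (d - 2)) ^ 4 := by rw [← pow_mul, mul_comm]
      _ ≤ N ^ 4 := Nat.pow_le_pow_left ((Nat.pow_le_pow_left (by omega) _).trans h.le) 4

theorem exp_mul_log_div_four_le {d : ℕ} {N : ℝ} (hN : 0 ≤ N) (h : (d : ℝ) ^ d ≤ N ^ 4) :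
    Real.exp (d * Real.log d / 4) ≤ N := by
  rw [← pow_le_pow_iff_left₀ (Real.exp_pos _).le hN four_ne_zero, ← Real.exp_nat_mul]
  rcases d.eq_zero_or_pos with rfl | hd
  · simpa using h
  · rwa [Nat.cast_ofNat, mul_div_cancel₀ _ four_ne_zero, Real.exp_nat_mul,
      Real.exp_log (by exact_mod_cast hd)]

theorem one_le_logb_two {x : ℝ} (hx : 2 ≤ x) : 1 ≤ Real.logb 2 x := by
  rwa [Real.le_logb_iff_rpow_le one_lt_two (by linarith), Real.rpow_one]

end Estimates

theorem stmt2 :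
    ∃ C : ℝ, 0 < C ∧
      ∀ (G : Type u) [AddCommGroup G] [DecidableEq G] (A : Finset G),
        2 ≤ addDim 1 A →
        ∀ k d n : ℕ,
          k = ⌈(addDim 1 A : ℝ) * Real.logb 2 (addDim 1 A)⌉₊ →
          d = addDim k A →
          2 ≤ d →
          n = ⌈(d : ℝ) ^ 2 * Real.logb 2 d⌉₊ →
          ((nFold A n).card : ℝ) ≥ Real.exp (C⁻¹ * d * Real.logb 2 d) := by
  refine ⟨4 / Real.log 2, by positivity, ?_⟩
  intro G _ _ A hD k d n hk hd hd2 hn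
  obtain ⟨Λ, hΛA, hΛcard, hΛ⟩ := exists_isKDissociated_card_eq_addDim k A
  have hDk : addDim 1 A ≤ k := by
    rw [hk, ← Nat.cast_le (α := ℝ)]
    refine (le_mul_of_one_le_right (by positivity) ?_).trans (Nat.le_ceil _)
    exact one_le_logb_two (by exact_mod_cast hD)
  have hdk : d ≤ k := hd ▸ (addDim_anti (by omega) A).trans hDk
  have hdn : d * d ≤ n := by
    rw [hn, ← Nat.cast_le (α := ℝ), Nat.cast_mul, ← sq]
    refine (le_mul_of_one_le_right (by positivity) ?_).trans (Nat.le_ceil _)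
    exact one_le_logb_two (by exact_mod_cast hd2)
  have hA : A.Nonempty := (Finset.card_pos.1 (by omega : 0 < Λ.card)).mono hΛA
  have hcount := card_pow_le_mul_card_nsmul (n := n) hA hΛA hΛ hdk (by rwa [hΛcard, ← hd])
  rw [hΛcard, ← hd, ← sq, ← nFold_eq_nsmul] at hcount
  have hsize := pow_self_le_pow_four_of_pow_sub_two_lt hd2 (pow_sub_two_lt_of_pow_le_mul hd2 hcount)
  have hC : (4 / Real.log 2)⁻¹ * d * Real.logb 2 d = d * Real.log d / 4 := by
    rw [Real.logb]
    field_simp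
  rw [ge_iff_le, hC]
  exact exp_mul_log_div_four_le (Nat.cast_nonneg _) (by exact_mod_cast hsize)
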